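/- arXiv:1603.04275 — 2 statements merged into one kernel-verified Lean document; each statement's English description precedes it below -/
import Mathlib

section
/- Let A be a Banach algebra with trivial product, X a Banach A-bimodule with trivial right action, and S : A → X a linear map. If the separating space 𝔖(S) is contained in ann_A X, then the bilinear map (a,b) ↦ a·(Sb), A × A → X, is (jointly) continuous. -/
def separatingSpace {X Y : Type*} [NormedAddCommGroup X] [NormedAddCommGroup Y]
    (S : X → Y) : Set Y :=
  {y | ∃ x : ℕ → X, Filter.Tendsto x Filter.atTop (nhds 0) ∧
    Filter.Tendsto (fun n => S (x n)) Filter.atTop (nhds y)}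

/-- The annihilator of `A` in `X` for a left action `L` (the right action being trivial). -/
def leftAnnihilator {A X : Type*} [NonUnitalNormedRing A] [NormedSpace ℝ A]
    [NormedAddCommGroup X] [NormedSpace ℝ X] (L : A →L[ℝ] X →L[ℝ] X) : Set X :=
  {x | ∀ a : A, L a x = 0}

/-!
The separating space `𝔖(S)` is the fibre over `0` of the closure of the graph of `S`, so it is a
closed subspace `N`, and that closure is `{(a, x) | x - S a ∈ N}`. Hence `S` followed by the
quotient map `X → X ⧸ N` has closed graph and is bounded by the closed graph theorem. When `N`
is annihilated by `A`, each `L a` factors through `X ⧸ N`, which gives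
`‖a · S b‖ ≤ ‖L‖ ‖mkQ ∘ S‖ ‖a‖ ‖b‖`.
-/

section SeparatingSpace

variable {𝕜 E F : Type*} [NontriviallyNormedField 𝕜]
  [NormedAddCommGroup E] [NormedSpace 𝕜 E] [NormedAddCommGroup F] [NormedSpace 𝕜 F]

theorem mem_separatingSpace_iff_mem_closure_graph (S : E →ₗ[𝕜] F) (y : F) :
    y ∈ separatingSpace S ↔ (0, y) ∈ closure (S.graph : Set (E × F)) := by
  rw [mem_closure_iff_seq_limit]
  constructor
  · rintro ⟨x, hx, hSx⟩
    exact ⟨fun n => (x n, S (x n)), fun n => (S.mem_graph_iff _).2 rfl, hx.prodMk_nhds hSx⟩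
  · rintro ⟨p, hp, hlim⟩
    refine ⟨fun n => (p n).1, hlim.fst_nhds, ?_⟩
    simpa only [← (S.mem_graph_iff _).1 (hp _)] using hlim.snd_nhds

def separatingSubmodule (S : E →ₗ[𝕜] F) : Submodule 𝕜 F :=
  S.graph.topologicalClosure.comap (LinearMap.inr 𝕜 E F)

theorem coe_separatingSubmodule (S : E →ₗ[𝕜] F) :
    (separatingSubmodule S : Set F) = separatingSpace S := by
  ext y
  exact (mem_separatingSpace_iff_mem_closure_graph S y).symm

instance isClosed_separatingSubmodule (S : E →ₗ[𝕜] F) :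
    IsClosed (separatingSubmodule S : Set F) :=
  S.graph.isClosed_topologicalClosure.preimage (continuous_const.prodMk continuous_id)

theorem mem_closure_graph_iff (S : E →ₗ[𝕜] F) (p : E × F) :
    p ∈ closure (S.graph : Set (E × F)) ↔ p.2 - S p.1 ∈ separatingSubmodule S := by
  have hp : p - (p.1, S p.1) = (0, p.2 - S p.1) := by ext <;> simp
  have hgraph : (p.1, S p.1) ∈ S.graph.topologicalClosure :=
    S.graph.le_topologicalClosure ((S.mem_graph_iff _).2 rfl)
  rw [← Submodule.topologicalClosure_coe, SetLike.mem_coe,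
    ← Submodule.sub_mem_iff_left _ hgraph, hp]
  rfl

theorem continuous_mkQ_comp_separatingSubmodule [CompleteSpace E] [CompleteSpace F]
    (S : E →ₗ[𝕜] F) : Continuous ((separatingSubmodule S).mkQ ∘ₗ S) := by
  refine LinearMap.continuous_of_isClosed_graph _ ?_
  have hΦ : IsOpenQuotientMap (Prod.map id (separatingSubmodule S).mkQ : E × F → _) :=
    IsOpenQuotientMap.id.prodMap (separatingSubmodule S).isOpenQuotientMap_mkQL
  rw [← hΦ.isQuotientMap.isClosed_preimage]
  convert isClosed_closure (s := (S.graph : Set (E × F))) using 1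
  ext p
  rw [mem_closure_graph_iff, ← Submodule.Quotient.eq]
  exact LinearMap.mem_graph_iff _ _

end SeparatingSpace

section QuotientBound

variable {𝕜 E F G H : Type*} [NontriviallyNormedField 𝕜]
  [NormedAddCommGroup E] [NormedSpace 𝕜 E] [NormedAddCommGroup F] [NormedSpace 𝕜 F]
  [NormedAddCommGroup G] [NormedSpace 𝕜 G] [NormedAddCommGroup H] [NormedSpace 𝕜 H]

theorem ContinuousLinearMap.norm_apply_le_mul_norm_mkQ {N : Submodule 𝕜 F} (f : F →L[𝕜] G)
    (hf : N ≤ f.ker) (x : F) : ‖f x‖ ≤ ‖f‖ * ‖N.mkQ x‖ := by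
  let g := (f : F →+ G).mkNormedAddGroupHom ‖f‖ f.le_opNorm
  calc ‖f x‖ ≤ ‖g‖ * ‖N.mkQ x‖ :=
        QuotientAddGroup.norm_lift_apply_le g (fun _ hy => hf hy) (x : F ⧸ N.toAddSubgroup)
    _ ≤ ‖f‖ * ‖N.mkQ x‖ := by
        gcongr
        exact AddMonoidHom.mkNormedAddGroupHom_norm_le _ (norm_nonneg f) f.le_opNorm

theorem continuous_apply_apply_of_le_ker {N : Submodule 𝕜 F} (L : E →L[𝕜] F →L[𝕜] G)
    (hL : ∀ a, N ≤ (L a).ker) (S : H →ₗ[𝕜] F) (hS : Continuous (N.mkQ ∘ₗ S)) :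
    Continuous fun p : E × H => L p.1 (S p.2) := by
  let T : H →L[𝕜] F ⧸ N := ⟨N.mkQ ∘ₗ S, hS⟩
  have hbound (a : E) (b : H) : ‖L a (S b)‖ ≤ ‖L‖ * ‖T‖ * ‖a‖ * ‖b‖ :=
    calc ‖L a (S b)‖ ≤ ‖L a‖ * ‖T b‖ := (L a).norm_apply_le_mul_norm_mkQ (hL a) (S b)
      _ ≤ ‖L‖ * ‖a‖ * (‖T‖ * ‖b‖) := by gcongr <;> apply ContinuousLinearMap.le_opNorm
      _ = ‖L‖ * ‖T‖ * ‖a‖ * ‖b‖ := by ring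
  exact ((L.toLinearMap₁₂.compl₂ S).mkContinuous₂ _ hbound).continuous₂

end QuotientBound

theorem continuous_coboundary_of_separatingSpace_subset_annihilator_general
    {A X : Type*} [NonUnitalNormedRing A] [NormedSpace ℝ A] [CompleteSpace A]
    [NormedAddCommGroup X] [NormedSpace ℝ X] [CompleteSpace X]
    (L : A →L[ℝ] X →L[ℝ] X)
    (S : A →ₗ[ℝ] X)
    (h : separatingSpace S ⊆ leftAnnihilator L) :
    Continuous fun p : A × A => L p.1 (S p.2) := by
  refine continuous_apply_apply_of_le_ker L (fun a y hy => ?_) S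
    (continuous_mkQ_comp_separatingSubmodule S)
  rw [← SetLike.mem_coe, coe_separatingSubmodule] at hy
  exact h hy a

/-- If 𝔖(S) ⊆ ann_A X, then the bilinear map (a,b) ↦ a·(Sb) is jointly continuous. -/
theorem continuous_coboundary_of_separatingSpace_subset_annihilator
    {A X : Type*} [NonUnitalNormedRing A] [NormedSpace ℝ A] [CompleteSpace A]
    [NormedAddCommGroup X] [NormedSpace ℝ X] [CompleteSpace X]
    (htriv : ∀ a b : A, a * b = 0)
    (L : A →L[ℝ] X →L[ℝ] X) (hL : ∀ (a b : A) (x : X), L (a * b) x = L a (L b x))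
    (S : A →ₗ[ℝ] X)
    (h : separatingSpace S ⊆ leftAnnihilator L) :
    Continuous fun p : A × A => L p.1 (S p.2) :=
  continuous_coboundary_of_separatingSpace_subset_annihilator_general L S h
end

section
/- Let Z be an infinite-dimensional Banach space such that every bounded linear map from Z into ℓ¹ is compact, let Ξ be a normalized Hamel basis for Z, and let S : Z → ℓ¹(Ξ) be the linear map with S ξ = e_ξ. Then for every bounded linear map T : Z → ℓ¹(Ξ), the range of S + T is not contained in the separating space 𝔖(S). -/
/-!
Write `P_F f = ∑_{ξ ∈ F} f ξ e_ξ` for the coordinate projection of `ℓ¹(Ξ)` onto a finite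
`F ⊆ Ξ` and `R_F f = ∑_{ξ ∈ F} f ξ • ξ`, a bounded map `ℓ¹(Ξ) → Z` with `S ∘ R_F = P_F`.
Since the basis is normalised, `‖x‖ ≤ ‖S x‖`. If `xₙ → 0` and `S xₙ → f`, passing to the limit
in `‖xₙ - R_F S xₙ‖ ≤ ‖S xₙ - P_F S xₙ‖` gives `‖R_F f‖ ≤ ‖f - P_F f‖`. For `f = S z + T z`
and `F` the support of `z` this yields `‖z‖ ≤ ‖T z‖`, so `T` is bounded below.
An infinite-dimensional `Z` contains a bounded `1`-separated sequence `uₙ`. The `T uₙ` live on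
countably many coordinates, and restricting `ℓ¹(Ξ)` to an enumeration of them turns `T` into an
operator `Z → ℓ¹(ℕ)` under which the images of the `uₙ` stay `1`-separated, so it is not compact.
-/

open Filter Topology Function
open scoped lp

theorem norm_le_norm_sub_of_mem_separatingSpace {𝕜 X Y : Type*} [NormedField 𝕜]
    [NormedAddCommGroup X] [NormedSpace 𝕜 X] [NormedAddCommGroup Y] [NormedSpace 𝕜 Y]
    {S : X →ₗ[𝕜] Y} (hS : ∀ x, ‖x‖ ≤ ‖S x‖) (R : Y →L[𝕜] X) (hSR : Continuous (S ∘ R))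
    {y : Y} (hy : y ∈ separatingSpace S) : ‖R y‖ ≤ ‖y - S (R y)‖ := by
  obtain ⟨x, hx, hSx⟩ := hy
  have hlim : Tendsto (fun n => x n - R (S (x n))) atTop (𝓝 (-R y)) := by
    simpa using hx.sub ((R.continuous.tendsto y).comp hSx)
  have hSlim : Tendsto (fun n => S (x n - R (S (x n)))) atTop (𝓝 (y - S (R y))) := by
    simp only [map_sub]
    exact hSx.sub ((hSR.tendsto y).comp hSx)
  simpa using le_of_tendsto_of_tendsto' hlim.norm hSlim.norm fun n => hS _

namespace lp

variable {𝕜 α ι E : Type*} [NormedField 𝕜] [NormedAddCommGroup E] [NormedSpace 𝕜 E]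
  {φ : α → ι}

theorem hasSum_norm_one (f : ℓ¹(ι, E)) : HasSum (fun i => ‖f i‖) ‖f‖ := by
  simpa using hasSum_norm (p := 1) (by norm_num) f

theorem countable_support_one (f : ℓ¹(ι, E)) : (support f).Countable := by
  simpa [support] using (hasSum_norm_one f).summable.countable_support

theorem sum_norm_le_norm_one (f : ℓ¹(ι, E)) (s : Finset ι) : ∑ i ∈ s, ‖f i‖ ≤ ‖f‖ := by
  simpa using sum_rpow_le_norm_rpow (p := 1) (by norm_num) f s

theorem memℓp_one_comp (hφ : Injective φ) (f : ℓ¹(ι, E)) : Memℓp (f ∘ φ) 1 :=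
  memℓp_gen <| by simpa [comp_def] using (hasSum_norm_one f).summable.comp_injective hφ

theorem norm_comp_le_one (hφ : Injective φ) (f : ℓ¹(ι, E)) :
    ‖(⟨f ∘ φ, memℓp_one_comp hφ f⟩ : ℓ¹(α, E))‖ ≤ ‖f‖ := by
  rw [← (hasSum_norm_one _).tsum_eq, ← (hasSum_norm_one f).tsum_eq]
  exact (hasSum_norm_one _).summable.tsum_le_tsum_of_inj φ hφ (fun _ _ => norm_nonneg _)
    (fun _ => le_rfl) (hasSum_norm_one f).summable

variable (𝕜 E) in
noncomputable def compInjective (hφ : Injective φ) : ℓ¹(ι, E) →L[𝕜] ℓ¹(α, E) :=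
  LinearMap.mkContinuous
    { toFun f := ⟨f ∘ φ, memℓp_one_comp hφ f⟩
      map_add' _ _ := rfl
      map_smul' _ _ := rfl } 1 fun f => by rw [one_mul]; exact norm_comp_le_one hφ f

theorem norm_compInjective (hφ : Injective φ) {f : ℓ¹(ι, E)}
    (hf : support f ⊆ Set.range φ) : ‖compInjective 𝕜 E hφ f‖ = ‖f‖ := by
  have h0 : ∀ i ∉ Set.range φ, ‖f i‖ = 0 := fun i hi => by
    simpa using notMem_support.1 (mt (@hf i) hi)
  exact (hasSum_norm_one _).unique ((hφ.hasSum_iff h0).2 (hasSum_norm_one f))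

variable [DecidableEq ι]

theorem norm_sub_sum_single_add_sum_norm_one (f : ℓ¹(ι, E)) (s : Finset ι) :
    ‖f - ∑ i ∈ s, lp.single 1 i (f i)‖ + ∑ i ∈ s, ‖f i‖ = ‖f‖ := by
  have := lp.norm_sub_norm_compl_sub_single (p := 1) (by norm_num) f s
  simp only [ENNReal.toReal_one, Real.rpow_one] at this
  linarith

end lp

section Basis

variable {𝕜 Z Ξ : Type*} [NormedField 𝕜] [NormedAddCommGroup Z] [NormedSpace 𝕜 Z]

variable (𝕜) in
noncomputable def partialSumCLM (v : Ξ → Z) (F : Finset Ξ) : ℓ¹(Ξ, 𝕜) →L[𝕜] Z :=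
  ∑ ξ ∈ F, (lp.evalCLM 𝕜 (fun _ : Ξ => 𝕜) 1 ξ).smulRight (v ξ)

theorem partialSumCLM_apply (v : Ξ → Z) (F : Finset Ξ) (f : ℓ¹(Ξ, 𝕜)) :
    partialSumCLM 𝕜 v F f = ∑ ξ ∈ F, f ξ • v ξ := by
  simp [partialSumCLM, lp.evalCLM]

theorem norm_partialSumCLM_le {v : Ξ → Z} (hv : ∀ ξ, ‖v ξ‖ = 1) (F : Finset Ξ)
    (f : ℓ¹(Ξ, 𝕜)) : ‖partialSumCLM 𝕜 v F f‖ ≤ ∑ ξ ∈ F, ‖f ξ‖ := by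
  rw [partialSumCLM_apply]
  refine (norm_sum_le _ _).trans_eq (Finset.sum_congr rfl fun ξ _ => ?_)
  rw [norm_smul, hv, mul_one]

variable [DecidableEq Ξ] {b : Module.Basis Ξ 𝕜 Z} {S : Z →ₗ[𝕜] ℓ¹(Ξ, 𝕜)}

theorem apply_eq_repr_of_map_basis_eq_single (hS : ∀ ξ, S (b ξ) = lp.single 1 ξ 1)
    (x : Z) (ξ : Ξ) : S x ξ = b.repr x ξ := by
  have : (lp.evalₗ (𝕜 := 𝕜) (fun _ : Ξ => 𝕜) 1 ξ).comp S = b.coord ξ := by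
    refine b.ext fun ξ' => ?_
    simp [hS, lp.single_apply, Finsupp.single_apply, Pi.single_apply, eq_comm]
  exact LinearMap.congr_fun this x

theorem map_partialSumCLM (hS : ∀ ξ, S (b ξ) = lp.single 1 ξ 1) (F : Finset Ξ)
    (f : ℓ¹(Ξ, 𝕜)) : S (partialSumCLM 𝕜 b F f) = ∑ ξ ∈ F, lp.single 1 ξ (f ξ) := by
  simp [partialSumCLM_apply, hS, ← lp.single_smul]

theorem partialSumCLM_map_of_support_subset (hS : ∀ ξ, S (b ξ) = lp.single 1 ξ 1) {x : Z}
    {F : Finset Ξ} (hF : (b.repr x).support ⊆ F) : partialSumCLM 𝕜 b F (S x) = x := by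
  simp only [partialSumCLM_apply, apply_eq_repr_of_map_basis_eq_single hS]
  conv_rhs => rw [← b.linearCombination_repr x]
  exact (Finsupp.linearCombination_apply_of_mem_supported 𝕜 hF).symm

theorem norm_le_norm_of_map_basis_eq_single (hb : ∀ ξ, ‖b ξ‖ = 1)
    (hS : ∀ ξ, S (b ξ) = lp.single 1 ξ 1) (x : Z) : ‖x‖ ≤ ‖S x‖ :=
  calc ‖x‖ = ‖partialSumCLM 𝕜 b (b.repr x).support (S x)‖ := by
        rw [partialSumCLM_map_of_support_subset hS subset_rfl]
    _ ≤ ∑ ξ ∈ (b.repr x).support, ‖S x ξ‖ := norm_partialSumCLM_le hb _ _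
    _ ≤ ‖S x‖ := lp.sum_norm_le_norm_one _ _

theorem norm_le_norm_of_add_mem_separatingSpace (hb : ∀ ξ, ‖b ξ‖ = 1)
    (hS : ∀ ξ, S (b ξ) = lp.single 1 ξ 1) {z : Z} {w : ℓ¹(Ξ, 𝕜)}
    (h : S z + w ∈ separatingSpace S) : ‖z‖ ≤ ‖w‖ := by
  set F := (b.repr z).support
  set R := partialSumCLM 𝕜 b F
  have hRS : R (S z) = z := partialSumCLM_map_of_support_subset hS subset_rfl
  have hSR : ∀ f, S (R f) = ∑ ξ ∈ F, lp.single 1 ξ (f ξ) := map_partialSumCLM hS F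
  have hcont : Continuous (S ∘ R) := by
    rw [show ⇑S ∘ ⇑R = fun f => ∑ ξ ∈ F, lp.single 1 ξ (f ξ) from funext hSR]
    exact continuous_finsetSum F fun ξ _ =>
      (lp.isometry_single ξ).continuous.comp (lp.evalCLM 𝕜 (fun _ : Ξ => 𝕜) 1 ξ).continuous
  have key := norm_le_norm_sub_of_mem_separatingSpace
    (norm_le_norm_of_map_basis_eq_single hb hS) R hcont h
  rw [map_add, hRS, map_add, hSR, add_sub_add_left_eq_sub] at key
  calc ‖z‖ ≤ ‖z + R w‖ + ‖R w‖ := norm_le_add_norm_add z (R w)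
    _ ≤ ‖w - ∑ ξ ∈ F, lp.single 1 ξ (w ξ)‖ + ∑ ξ ∈ F, ‖w ξ‖ :=
        add_le_add key (norm_partialSumCLM_le hb F w)
    _ = ‖w‖ := lp.norm_sub_sum_single_add_sum_norm_one w F

end Basis

theorem IsCompactOperator.exists_ne_dist_lt {𝕜 E F : Type*} [NontriviallyNormedField 𝕜]
    [NormedAddCommGroup E] [NormedSpace 𝕜 E] [NormedAddCommGroup F] [NormedSpace 𝕜 F]
    {K : E →L[𝕜] F} (hK : IsCompactOperator K) {u : ℕ → E} {R : ℝ} (hu : ∀ n, ‖u n‖ ≤ R)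
    {ε : ℝ} (hε : 0 < ε) : ∃ m n, m ≠ n ∧ dist (K (u m)) (K (u n)) < ε := by
  obtain ⟨C, hC, hKC⟩ := hK.image_closedBall_subset_compact (f := (K : E →ₗ[𝕜] F)) R
  obtain ⟨_, -, ψ, hψ, hlim⟩ :=
    hC.tendsto_subseq (x := fun n => K (u n)) fun n =>
      hKC ⟨u n, mem_closedBall_zero_iff.2 (hu n), rfl⟩
  obtain ⟨N, hN⟩ := Metric.cauchySeq_iff'.1 hlim.cauchySeq ε hε
  exact ⟨ψ (N + 1), ψ N, hψ.injective.ne N.succ_ne_self, hN (N + 1) N.le_succ⟩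

theorem Set.Countable.exists_injective_nat_subset_range {ι : Type*} [Infinite ι] {A : Set ι}
    (hA : A.Countable) : ∃ φ : ℕ → ι, Injective φ ∧ A ⊆ Set.range φ := by
  set B := A ∪ Set.range (_root_.Infinite.natEmbedding ι)
  have hB : B.Countable ∧ B.Infinite :=
    ⟨hA.union (Set.countable_range _),
      (Set.infinite_range_of_injective (_root_.Infinite.natEmbedding ι).injective).mono
        Set.subset_union_right⟩
  obtain ⟨_⟩ := Set.countable_infinite_iff_nonempty_denumerable.1 hB
  refine ⟨Subtype.val ∘ (Denumerable.eqv B).symm,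
    Subtype.val_injective.comp (Denumerable.eqv B).symm.injective, fun a ha => ?_⟩
  exact ⟨Denumerable.eqv B ⟨a, Set.subset_union_left ha⟩, by simp⟩

theorem range_add_not_subset_separatingSpace_general
    {Z : Type*} [NormedAddCommGroup Z] [NormedSpace ℝ Z]
    (hinf : ¬ FiniteDimensional ℝ Z)
    (hcpt : ∀ T : Z →L[ℝ] lp (fun _ : ℕ => ℝ) 1, IsCompactOperator T)
    {Ξ : Type*} [DecidableEq Ξ] (b : Module.Basis Ξ ℝ Z) (hb : ∀ ξ : Ξ, ‖b ξ‖ = 1)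
    (S : Z →ₗ[ℝ] lp (fun _ : Ξ => ℝ) 1)
    (hS : ∀ ξ : Ξ, S (b ξ) = lp.single (E := fun _ : Ξ => ℝ) 1 ξ (1 : ℝ))
    (T : Z →L[ℝ] lp (fun _ : Ξ => ℝ) 1) :
    ¬ ∀ z : Z, S z + T z ∈ separatingSpace S := by
  intro h
  have hT (z : Z) : ‖z‖ ≤ ‖T z‖ := norm_le_norm_of_add_mem_separatingSpace hb hS (h z)
  have : Infinite Ξ := not_finite_iff_infinite.1 fun _ => hinf (Module.Finite.of_basis b)
  obtain ⟨R, u, -, hu, hsep⟩ := exists_seq_norm_le_one_le_norm_sub hinf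
  obtain ⟨φ, hφ, hA⟩ := (Set.countable_iUnion fun n =>
    lp.countable_support_one (T (u n))).exists_injective_nat_subset_range
  set K := (lp.compInjective ℝ ℝ hφ).comp T
  obtain ⟨m, n, hmn, hlt⟩ := (hcpt K).exists_ne_dist_lt hu one_pos
  have hsupp : support (T (u m - u n)) ⊆ Set.range φ := by
    rw [map_sub, lp.coeFn_sub]
    exact (support_sub _ _).trans
      (Set.union_subset ((Set.subset_iUnion _ m).trans hA) ((Set.subset_iUnion _ n).trans hA))
  have hdist : dist (K (u m)) (K (u n)) = ‖T (u m - u n)‖ := by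
    rw [dist_eq_norm, ← map_sub, ContinuousLinearMap.comp_apply, lp.norm_compInjective hφ hsupp]
  linarith [hsep hmn, hT (u m - u n)]

/-- Let Z be an infinite-dimensional Banach space such that every bounded linear map from
Z into ℓ¹ is compact, Ξ a normalized Hamel basis for Z, and S : Z → ℓ¹(Ξ) the linear map
with S ξ = e_ξ. Then for every bounded linear map T : Z → ℓ¹(Ξ), the range of S + T is
not contained in the separating space 𝔖(S). -/
theorem range_add_not_subset_separatingSpace
    {Z : Type*} [NormedAddCommGroup Z] [NormedSpace ℝ Z] [CompleteSpace Z]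
    (hinf : ¬ FiniteDimensional ℝ Z)
    (hcpt : ∀ T : Z →L[ℝ] lp (fun _ : ℕ => ℝ) 1, IsCompactOperator T)
    {Ξ : Type*} [DecidableEq Ξ] (b : Module.Basis Ξ ℝ Z) (hb : ∀ ξ : Ξ, ‖b ξ‖ = 1)
    (S : Z →ₗ[ℝ] lp (fun _ : Ξ => ℝ) 1)
    (hS : ∀ ξ : Ξ, S (b ξ) = lp.single (E := fun _ : Ξ => ℝ) 1 ξ (1 : ℝ))
    (T : Z →L[ℝ] lp (fun _ : Ξ => ℝ) 1) :
    ¬ ∀ z : Z, S z + T z ∈ separatingSpace S :=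
  range_add_not_subset_separatingSpace_general hinf hcpt b hb S hS T
end
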